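/- Define Z_2^j(w) = (2√π)^{-1} Σ_{k ∈ Z_0, k ≠ j} w_k w_{j−k} / (k(k−j)) for j ∈ Z_0 and w ∈ h^m(Z_0), m ≥ 0. Then the map w ↦ (Z_2^j(w))_{j∈Z_0} is a bounded quadratic map from h^m(Z_0) to h^{m+1}(Z_0): ‖Z_2(w)‖_{m+1} ≤ C ‖w‖_m² for some constant C = C(m). -/

import Mathlib

/-!
With the convention `w_0 / 0 = 0` in `ℂ`, put `v_k = w_k / k`; the sum defining `Z₂^j(w)` is then
dominated by the convolution `(|v| ⋆ |v|)(j)`. Since `|j| ≤ |k| + |j - k|`, the power mean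
inequality `(x + y)^{m+1} ≤ 2^m (x^{m+1} + y^{m+1})` moves the weight `|j|^{m+1}` onto one of
the two factors, and `|k|^{m+1} |v_k| ≤ |k|^m |w_k|`. Hence `|j|^{m+1} |Z₂^j(w)|` is bounded by
a multiple of the convolution of `|v| ∈ ℓ¹` with `(|k|^m |w_k|)_k ∈ ℓ²`, whose `ℓ²` norm is
`‖w‖_m`. Young's inequality `‖f ⋆ g‖₂ ≤ ‖f‖₁ ‖g‖₂` and the Cauchy–Schwarz bound
`‖v‖₁ ≤ ‖(1/k)_k‖₂ ‖w‖_m` conclude.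
All sums are taken in `ℝ≥0∞`, so that no summability has to be tracked.
-/

open scoped ENNReal NNReal Real

noncomputable section

/-- The weighted `l²` norm on `h^m(ℤ_0)`: `‖w‖_m² = Σ_{j≠0} |j|^{2m}|w_j|²`. -/
def Hc (s : ℝ) (w : ℤ → ℂ) : ℝ≥0∞ :=
  (∑' k : ℤ, (k.natAbs : ℝ≥0∞) ^ (2 * s) * (‖w k‖₊ : ℝ≥0∞) ^ 2) ^ ((1 : ℝ) / 2)

/-- The quadratic term of the Birkhoff normal form map for KdV:
`Z₂^j(w) = (2√π)⁻¹ Σ_{k ≠ 0, j} w_k w_{j−k}/(k(k−j))`. -/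
def Z2 (w : ℤ → ℂ) (j : ℤ) : ℂ :=
  ((2 * Real.sqrt π)⁻¹ : ℝ) *
    ∑' k : ℤ, if k ≠ 0 ∧ k ≠ j then w k * w (j - k) / ((k : ℂ) * ((k : ℂ) - (j : ℂ))) else 0

namespace ENNReal

variable {ι : Type*}

theorem rpow_one_half_sq (x : ℝ≥0∞) : (x ^ (1 / 2 : ℝ)) ^ 2 = x := by
  simpa using rpow_inv_natCast_pow two_ne_zero x

open MeasureTheory in
theorem tsum_mul_sq_le_sq_mul_sq (f g : ι → ℝ≥0∞) :
    (∑' i, f i * g i) ^ 2 ≤ (∑' i, f i ^ 2) * ∑' i, g i ^ 2 := by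
  let _ : MeasurableSpace ι := ⊤
  have h := lintegral_mul_le_Lp_mul_Lq Measure.count Real.HolderConjugate.two_two
    (measurable_from_top (f := f)).aemeasurable (measurable_from_top (f := g)).aemeasurable
  simp only [lintegral_count, Pi.mul_apply, rpow_ofNat] at h
  calc (∑' i, f i * g i) ^ 2
      ≤ ((∑' i, f i ^ 2) ^ (1 / 2 : ℝ) * (∑' i, g i ^ 2) ^ (1 / 2 : ℝ)) ^ 2 := by gcongr
    _ = (∑' i, f i ^ 2) * ∑' i, g i ^ 2 := by rw [mul_pow, rpow_one_half_sq, rpow_one_half_sq]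

theorem tsum_mul_sq_le_tsum_mul_tsum_mul_sq (f g : ι → ℝ≥0∞) :
    (∑' i, f i * g i) ^ 2 ≤ (∑' i, f i) * ∑' i, f i * g i ^ 2 := by
  convert tsum_mul_sq_le_sq_mul_sq (fun i => f i ^ (1 / 2 : ℝ)) (fun i => f i ^ (1 / 2 : ℝ) * g i)
    using 3
  · funext i; rw [← mul_assoc, ← sq, rpow_one_half_sq]
  · funext i; rw [rpow_one_half_sq]
  · funext i; rw [mul_pow, rpow_one_half_sq]

theorem tsum_sq_convolution_le {G : Type*} [AddGroup G] (f g : G → ℝ≥0∞) :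
    ∑' j, (∑' k, f k * g (j - k)) ^ 2 ≤ (∑' k, f k) ^ 2 * ∑' k, g k ^ 2 := by
  have hshift (k : G) : ∑' j, g (j - k) ^ 2 = ∑' i, g i ^ 2 :=
    (Equiv.subRight k).tsum_eq fun i => g i ^ 2
  calc ∑' j, (∑' k, f k * g (j - k)) ^ 2
      ≤ ∑' j, (∑' k, f k) * ∑' k, f k * g (j - k) ^ 2 :=
        ENNReal.tsum_le_tsum fun j => tsum_mul_sq_le_tsum_mul_tsum_mul_sq f _
    _ = (∑' k, f k) * ∑' k, f k * ∑' j, g (j - k) ^ 2 := by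
        rw [ENNReal.tsum_mul_left, ENNReal.tsum_comm]
        simp_rw [ENNReal.tsum_mul_left]
    _ = (∑' k, f k) ^ 2 * ∑' k, g k ^ 2 := by
        simp_rw [hshift]
        rw [ENNReal.tsum_mul_right, sq, mul_assoc]

end ENNReal

theorem tsum_mul_sub_comm {G R : Type*} [AddCommGroup G] [CommSemiring R] [TopologicalSpace R]
    (f g : G → R) (j : G) : ∑' k, f k * g (j - k) = ∑' k, g k * f (j - k) := by
  rw [← (Equiv.subLeft j).tsum_eq]
  simp [Equiv.subLeft, mul_comm]

theorem nnnorm_mul_nnnorm_div_le {𝕜 : Type*} [NormedDivisionRing 𝕜] (x z : 𝕜) :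
    ‖x‖₊ * ‖z / x‖₊ ≤ ‖z‖₊ := by
  rcases eq_or_ne x 0 with rfl | hx
  · simp
  · rw [mul_comm, ← nnnorm_mul, div_mul_cancel₀ z hx]

theorem Complex.coe_nnnorm_intCast (k : ℤ) : (‖(k : ℂ)‖₊ : ℝ≥0∞) = k.natAbs := by
  rw [Complex.nnnorm_intCast, ← NNReal.natCast_natAbs]
  rfl

theorem natAbs_rpow_mul_mul_le {m : ℝ} (hm : 0 ≤ m) {F G : ℤ → ℝ≥0∞}
    (hFG : ∀ k : ℤ, (k.natAbs : ℝ≥0∞) ^ (m + 1) * G k ≤ F k) (j k : ℤ) :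
    (j.natAbs : ℝ≥0∞) ^ (m + 1) * (G k * G (j - k)) ≤
      2 ^ m * (F k * G (j - k) + G k * F (j - k)) := by
  have htri : (j.natAbs : ℝ≥0∞) ≤ k.natAbs + (j - k).natAbs := by
    exact_mod_cast (by simpa using Int.natAbs_add_le k (j - k))
  calc (j.natAbs : ℝ≥0∞) ^ (m + 1) * (G k * G (j - k))
      ≤ 2 ^ m * ((k.natAbs : ℝ≥0∞) ^ (m + 1) + ((j - k).natAbs : ℝ≥0∞) ^ (m + 1)) *
          (G k * G (j - k)) := by
        gcongr
        calc _ ≤ ((k.natAbs : ℝ≥0∞) + (j - k).natAbs) ^ (m + 1) := by gcongr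
          _ ≤ _ := by
            simpa using ENNReal.rpow_add_le_mul_rpow_add_rpow _ _ (by linarith : 1 ≤ m + 1)
    _ = 2 ^ m * ((k.natAbs : ℝ≥0∞) ^ (m + 1) * G k * G (j - k) +
          G k * (((j - k).natAbs : ℝ≥0∞) ^ (m + 1) * G (j - k))) := by ring
    _ ≤ 2 ^ m * (F k * G (j - k) + G k * F (j - k)) := by gcongr <;> apply hFG

theorem sq_Hc (s : ℝ) (w : ℤ → ℂ) :
    Hc s w ^ 2 = ∑' k : ℤ, ((k.natAbs : ℝ≥0∞) ^ s * ‖w k‖₊) ^ 2 := by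
  rw [Hc, ENNReal.rpow_one_half_sq]
  congr! 2 with k
  rw [mul_pow, ← ENNReal.rpow_mul_natCast, Nat.cast_ofNat, mul_comm s]

theorem nnnorm_Z2_le (w : ℤ → ℂ) (j : ℤ) :
    (‖Z2 w j‖₊ : ℝ≥0∞) ≤
      ‖(2 * √π)⁻¹‖₊ * ∑' k : ℤ, (‖w k / k‖₊ : ℝ≥0∞) * ‖w (j - k) / (j - k : ℤ)‖₊ := by
  rw [Z2, nnnorm_mul, ENNReal.coe_mul, Complex.nnnorm_real]
  gcongr
  rw [← enorm_eq_nnnorm]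
  refine enorm_tsum_le_tsum_enorm.trans (ENNReal.tsum_le_tsum fun k => ?_)
  split_ifs
  · have hden : (k : ℂ) * (k - j) = -(k * (j - k : ℤ)) := by push_cast; ring
    rw [enorm_eq_nnnorm, ← ENNReal.coe_mul, ← nnnorm_mul, div_mul_div_comm, hden, div_neg,
      nnnorm_neg]
  · simp

theorem natAbs_rpow_mul_nnnorm_Z2_le {m : ℝ} (hm : 0 ≤ m) (w : ℤ → ℂ) (j : ℤ) :
    (j.natAbs : ℝ≥0∞) ^ (m + 1) * ‖Z2 w j‖₊ ≤
      ‖(2 * √π)⁻¹‖₊ * 2 ^ (m + 1) * ∑' k : ℤ, (‖w k / k‖₊ : ℝ≥0∞) *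
        (((j - k).natAbs : ℝ≥0∞) ^ m * ‖w (j - k)‖₊) := by
  set F : ℤ → ℝ≥0∞ := fun k => (k.natAbs : ℝ≥0∞) ^ m * ‖w k‖₊
  set G : ℤ → ℝ≥0∞ := fun k => ‖w k / k‖₊
  have hFG (k : ℤ) : (k.natAbs : ℝ≥0∞) ^ (m + 1) * G k ≤ F k := by
    simp only [F, G]
    rw [ENNReal.rpow_add_of_nonneg _ _ hm zero_le_one, ENNReal.rpow_one, mul_assoc,
      ← Complex.coe_nnnorm_intCast, ← ENNReal.coe_mul]
    gcongr
    exact nnnorm_mul_nnnorm_div_le _ _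
  calc (j.natAbs : ℝ≥0∞) ^ (m + 1) * ‖Z2 w j‖₊
      ≤ (j.natAbs : ℝ≥0∞) ^ (m + 1) * (‖(2 * √π)⁻¹‖₊ * ∑' k, G k * G (j - k)) := by
        gcongr
        exact nnnorm_Z2_le w j
    _ = ‖(2 * √π)⁻¹‖₊ * ∑' k, (j.natAbs : ℝ≥0∞) ^ (m + 1) * (G k * G (j - k)) := by
        rw [ENNReal.tsum_mul_left, mul_left_comm]
    _ ≤ ‖(2 * √π)⁻¹‖₊ * ∑' k, 2 ^ m * (F k * G (j - k) + G k * F (j - k)) :=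
        mul_le_mul_right (ENNReal.tsum_le_tsum fun k => natAbs_rpow_mul_mul_le hm hFG j k) _
    _ = ‖(2 * √π)⁻¹‖₊ * 2 ^ (m + 1) * ∑' k, G k * F (j - k) := by
        rw [ENNReal.tsum_mul_left, ENNReal.tsum_add, tsum_mul_sub_comm F G,
          ENNReal.rpow_add_of_nonneg _ _ hm zero_le_one, ENNReal.rpow_one]
        ring

theorem sq_Hc_Z2_le {m : ℝ} (hm : 0 ≤ m) (w : ℤ → ℂ) :
    Hc (m + 1) (Z2 w) ^ 2 ≤
      (‖(2 * √π)⁻¹‖₊ * 2 ^ (m + 1)) ^ 2 * (∑' k : ℤ, (‖w k / k‖₊ : ℝ≥0∞)) ^ 2 * Hc m w ^ 2 := by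
  rw [sq_Hc, sq_Hc, mul_assoc]
  calc ∑' j : ℤ, ((j.natAbs : ℝ≥0∞) ^ (m + 1) * ‖Z2 w j‖₊) ^ 2
      ≤ ∑' j : ℤ, (‖(2 * √π)⁻¹‖₊ * 2 ^ (m + 1) * ∑' k : ℤ, (‖w k / k‖₊ : ℝ≥0∞) *
          (((j - k).natAbs : ℝ≥0∞) ^ m * ‖w (j - k)‖₊)) ^ 2 :=
        ENNReal.tsum_le_tsum fun j => pow_le_pow_left' (natAbs_rpow_mul_nnnorm_Z2_le hm w j) 2
    _ ≤ _ := by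
        simp_rw [mul_pow _ (∑' k : ℤ, _)]
        rw [ENNReal.tsum_mul_left]
        gcongr
        exact ENNReal.tsum_sq_convolution_le _ fun k : ℤ => (k.natAbs : ℝ≥0∞) ^ m * ‖w k‖₊

theorem sq_tsum_nnnorm_div_le {m : ℝ} (hm : 0 ≤ m) (w : ℤ → ℂ) :
    (∑' k : ℤ, (‖w k / k‖₊ : ℝ≥0∞)) ^ 2 ≤
      (∑' k : ℤ, (‖(k : ℂ)⁻¹‖₊ : ℝ≥0∞) ^ 2) * Hc m w ^ 2 := by
  have hle (k : ℤ) :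
      (‖w k / k‖₊ : ℝ≥0∞) ≤ ‖(k : ℂ)⁻¹‖₊ * ((k.natAbs : ℝ≥0∞) ^ m * ‖w k‖₊) := by
    rcases eq_or_ne k 0 with rfl | hk
    · simp
    · rw [div_eq_mul_inv, nnnorm_mul, ENNReal.coe_mul, mul_comm]
      gcongr
      have h1 : (1 : ℝ≥0∞) ≤ k.natAbs := by exact_mod_cast Int.natAbs_pos.2 hk
      exact le_mul_of_one_le_left zero_le (by simpa using ENNReal.rpow_le_rpow h1 hm)
  calc (∑' k : ℤ, (‖w k / k‖₊ : ℝ≥0∞)) ^ 2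
      ≤ (∑' k : ℤ, (‖(k : ℂ)⁻¹‖₊ : ℝ≥0∞) * ((k.natAbs : ℝ≥0∞) ^ m * ‖w k‖₊)) ^ 2 := by
        gcongr with k
        exact hle k
    _ ≤ _ := by
        rw [sq_Hc]
        exact ENNReal.tsum_mul_sq_le_sq_mul_sq _ _

theorem tsum_nnnorm_intCast_inv_sq_ne_top : ∑' k : ℤ, (‖(k : ℂ)⁻¹‖₊ : ℝ≥0∞) ^ 2 ≠ ∞ := by
  simp_rw [← ENNReal.coe_pow]
  rw [ENNReal.tsum_coe_ne_top_iff_summable, ← NNReal.summable_coe]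
  simpa [Int.norm_eq_abs] using Real.summable_one_div_int_pow.2 one_lt_two

theorem Hc_Z2_le {m : ℝ} (hm : 0 ≤ m) (w : ℤ → ℂ) :
    Hc (m + 1) (Z2 w) ≤ ‖(2 * √π)⁻¹‖₊ * 2 ^ (m + 1) *
      (∑' k : ℤ, (‖(k : ℂ)⁻¹‖₊ : ℝ≥0∞) ^ 2) ^ (1 / 2 : ℝ) * Hc m w ^ 2 := by
  set c : ℝ≥0∞ := ‖(2 * √π)⁻¹‖₊ * 2 ^ (m + 1)
  set K : ℝ≥0∞ := ∑' k : ℤ, (‖(k : ℂ)⁻¹‖₊ : ℝ≥0∞) ^ 2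
  rw [← ENNReal.pow_le_pow_left_iff two_ne_zero]
  calc Hc (m + 1) (Z2 w) ^ 2 ≤ c ^ 2 * (∑' k : ℤ, (‖w k / k‖₊ : ℝ≥0∞)) ^ 2 * Hc m w ^ 2 :=
        sq_Hc_Z2_le hm w
    _ ≤ c ^ 2 * (K * Hc m w ^ 2) * Hc m w ^ 2 := by
        gcongr
        exact sq_tsum_nnnorm_div_le hm w
    _ = (c * K ^ (1 / 2 : ℝ) * Hc m w ^ 2) ^ 2 := by
        rw [mul_pow (c * _), mul_pow c, ENNReal.rpow_one_half_sq]
        ring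

/-- For `m ≥ 0`, the map `w ↦ (Z₂^j(w))_{j∈ℤ_0}` is a bounded quadratic map
from `h^m(ℤ_0)` to `h^{m+1}(ℤ_0)`: `‖Z₂(w)‖_{m+1} ≤ C ‖w‖_m²` for some `C = C(m)`. -/
theorem Z2_bound (m : ℝ) (hm : 0 ≤ m) :
    ∃ C : ℝ≥0∞, 0 < C ∧ C < ∞ ∧
      ∀ w : ℤ → ℂ, w 0 = 0 → Hc (m + 1) (Z2 w) ≤ C * Hc m w ^ 2 := by
  have hK : 1 ≤ ∑' k : ℤ, (‖(k : ℂ)⁻¹‖₊ : ℝ≥0∞) ^ 2 :=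
    calc 1 = (‖((1 : ℤ) : ℂ)⁻¹‖₊ : ℝ≥0∞) ^ 2 := by simp
      _ ≤ _ := ENNReal.le_tsum (1 : ℤ)
  have hc : (‖(2 * √π)⁻¹‖₊ : ℝ≥0∞) ≠ 0 := by simp [Real.sqrt_ne_zero', Real.pi_pos]
  refine ⟨_, ?_, ?_, fun w _ => Hc_Z2_le hm w⟩
  · have := (zero_lt_one.trans_le hK).ne'
    positivity
  · have := tsum_nnnorm_intCast_inv_sq_ne_top
    finiteness
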